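/- Let p, ν ∈ ℕ₀ with ν ≤ p, and suppose q_{p,ν} ∈ Λ_{p−ν}^{p+ν+1} satisfies q_{p,ν}(1) = 1, q_{p,ν}(−1) = 0 and q_{p,ν}^{(i)}(±1) = 0 for i = 1,…,ν. If u ∈ H^{ν+1}(Ω) satisfies u^{(ν+1)} = q_{p,ν}, then the trace bound is attained with equality: |(u − π_p u)^{(ν)}(1)| = ‖q_{p,ν}‖₀ · |u|_{ν+1}. -/

import Mathlib

open MeasureTheory Polynomial

noncomputable section

/-- The Legendre polynomial of degree `n`, via Rodrigues' formula. -/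
def leg (n : ℕ) : Polynomial ℝ :=
  ((1 : ℝ) / (2 ^ n * n.factorial)) • derivative^[n] ((X ^ 2 - 1) ^ n)

/-- The closed interval `Ω̄ = [-1, 1]`. -/
def Iom : Set ℝ := Set.Icc (-1 : ℝ) 1

/-- Squared `L²(Ω)` norm. -/
def nsq (f : ℝ → ℝ) : ℝ := ∫ x in Iom, f x ^ 2

/-- The `L²(Ω)` inner product. -/
def ip (f g : ℝ → ℝ) : ℝ := ∫ x in Iom, f x * g x

/-- Membership in the Sobolev space `H^k(Ω)` (strong form). -/
def MemH (k : ℕ) (w : ℝ → ℝ) : Prop := ContDiffOn ℝ k w Iom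

/-- The squared Sobolev seminorm `|w|_k² = ‖w^{(k)}‖₀²`. -/
def semSq (k : ℕ) (w : ℝ → ℝ) : ℝ := nsq (iteratedDerivWithin k w Iom)

/-- `P` coincides with a polynomial of degree `≤ p`. -/
def IsPolyDeg (p : ℕ) (P : ℝ → ℝ) : Prop :=
  ∃ q : Polynomial ℝ, q.natDegree ≤ p ∧ ∀ x, P x = q.eval x

/-- `P = π_p w` is the `L²(Ω)` projection of `w` onto polynomials of degree `≤ p`. -/
def IsL2Proj (p : ℕ) (w P : ℝ → ℝ) : Prop :=
  IsPolyDeg p P ∧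
    ∀ v : Polynomial ℝ, v.natDegree ≤ p → ∫ x in Iom, (P x - w x) * v.eval x = 0

/-- `ψ_{i,n}`: the `n`-th primitive of the Legendre polynomial `L_i`. -/
def psi (i : ℕ) : ℕ → ℝ → ℝ
  | 0 => fun x => (leg i).eval x
  | n + 1 => fun x => ∫ t in (-1 : ℝ)..x, psi i n t

/-- `f ∈ Λ_i^j = span{L_i, …, L_j}`. -/
def inLegSpan (i j : ℕ) (f : ℝ → ℝ) : Prop :=
  ∃ c : ℕ → ℝ, ∀ x, f x = ∑ m ∈ Finset.Icc i j, c m * (leg m).eval x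

/-- The defining properties of `q_{p,ν}`. -/
def IsQ (p ν : ℕ) (q : ℝ → ℝ) : Prop :=
  inLegSpan (p - ν) (p + ν + 1) q ∧ q 1 = 1 ∧ q (-1) = 0 ∧
    ∀ i, 1 ≤ i → i ≤ ν → iteratedDeriv i q 1 = 0 ∧ iteratedDeriv i q (-1) = 0

/-- Recursive construction of `q_{p,ν}`. -/
def qrec (p : ℕ) : ℕ → ℝ → ℝ
  | 0 => fun x => ((leg p).eval x + (leg (p + 1)).eval x) / 2
  | ν + 1 => fun x =>
      qrec p ν x
        + (-(iteratedDeriv (ν + 1) (qrec p ν) 1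
              + (-1 : ℝ) ^ p * iteratedDeriv (ν + 1) (qrec p ν) (-1)) / 2) * psi p (ν + 1) x
        + (-(iteratedDeriv (ν + 1) (qrec p ν) 1
              - (-1 : ℝ) ^ p * iteratedDeriv (ν + 1) (qrec p ν) (-1)) / 2) * psi (p + 1) (ν + 1) x

/-- The coefficient `α_{p,ν}` of the recursive construction. -/
def alphaC (p ν : ℕ) : ℝ :=
  -(iteratedDeriv ν (qrec p (ν - 1)) 1 + (-1 : ℝ) ^ p * iteratedDeriv ν (qrec p (ν - 1)) (-1)) / 2

/-- The coefficient `β_{p,ν}` of the recursive construction. -/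
def betaC (p ν : ℕ) : ℝ :=
  -(iteratedDeriv ν (qrec p (ν - 1)) 1 - (-1 : ℝ) ^ p * iteratedDeriv ν (qrec p (ν - 1)) (-1)) / 2

end

/-!
Since `u^{(ν+1)} = q` is a polynomial, `u` is a polynomial on `Ω̄`, and so is the error
`e = u - π_p u`. Integrating by parts `ν + 1` times against `q`, whose derivatives of order
`1, …, ν` vanish at `±1` while `q(1) = 1`, `q(-1) = 0`, gives
`e^{(ν)}(1) = ∫ q e^{(ν+1)} + (-1)^ν ∫ q^{(ν+1)} e`.
The second integral vanishes because `deg q^{(ν+1)} ≤ p` and `e ⊥ 𝒫_p`. In the first,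
`e^{(ν+1)} = q - (π_p u)^{(ν+1)}`, and `q ∈ Λ_{p-ν}^{p+ν+1}` is orthogonal to
`(π_p u)^{(ν+1)} ∈ 𝒫_{p-ν-1}`, so `e^{(ν)}(1) = ‖q‖₀² = ‖q‖₀ |u|_{ν+1}`.
-/

open Set

namespace Polynomial

theorem exists_derivative_eq {K : Type*} [Field K] [CharZero K] (q : K[X]) :
    ∃ H : K[X], derivative H = q := by
  induction q using Polynomial.induction_on' with
  | add p q hp hq =>
    obtain ⟨a, rfl⟩ := hp
    obtain ⟨b, rfl⟩ := hq
    exact ⟨a + b, derivative_add⟩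
  | monomial k a =>
    refine ⟨C (a / (k + 1)) * X ^ (k + 1), ?_⟩
    rw [derivative_C_mul_X_pow, ← C_mul_X_pow_eq_monomial]
    congr 1
    push_cast
    field_simp

section IteratedDeriv

variable {𝕜 : Type*} [NontriviallyNormedField 𝕜]

theorem iteratedDeriv_eval (P : 𝕜[X]) (n : ℕ) :
    iteratedDeriv n (fun x => P.eval x) = fun x => (derivative^[n] P).eval x := by
  induction n generalizing P with
  | zero => simp
  | succ n ih =>
    rw [iteratedDeriv_succ', Function.iterate_succ_apply, ← ih]
    congr 1
    ext x
    exact P.deriv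

theorem iteratedDerivWithin_eval (P : 𝕜[X]) (n : ℕ) {s : Set 𝕜} (hs : UniqueDiffOn 𝕜 s)
    {x : 𝕜} (hx : x ∈ s) :
    iteratedDerivWithin n (fun y => P.eval y) s x = (derivative^[n] P).eval x := by
  have hP : ContDiff 𝕜 n (fun y => P.eval y) := by simpa using P.contDiff_aeval (𝕜 := 𝕜) n
  rw [iteratedDerivWithin_eq_iteratedDeriv hs hP.contDiffAt hx, iteratedDeriv_eval]

end IteratedDeriv

theorem integral_eval_mul_derivative_eval (a b : ℝ) (f g : ℝ[X]) :
    ∫ x in a..b, f.eval x * (derivative g).eval x =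
      f.eval b * g.eval b - f.eval a * g.eval a - ∫ x in a..b, (derivative f).eval x * g.eval x :=
  intervalIntegral.integral_mul_deriv_eq_deriv_mul (fun x _ => f.hasDerivAt x)
    (fun x _ => g.hasDerivAt x) (f.derivative.continuous.intervalIntegrable _ _)
    (g.derivative.continuous.intervalIntegrable _ _)

theorem integral_iterate_derivative_eval_mul_eval {a b : ℝ} {n : ℕ} {f : ℝ[X]}
    (hf : ∀ j < n, (derivative^[j] f).eval a = 0 ∧ (derivative^[j] f).eval b = 0) (g : ℝ[X]) :
    ∫ x in a..b, (derivative^[n] f).eval x * g.eval x =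
      (-1) ^ n * ∫ x in a..b, f.eval x * (derivative^[n] g).eval x := by
  induction n generalizing f with
  | zero => simp
  | succ n ih =>
    have hf' : ∀ j < n, (derivative^[j] (derivative f)).eval a = 0 ∧
        (derivative^[j] (derivative f)).eval b = 0 := fun j hj => hf (j + 1) (by omega)
    obtain ⟨hfa, hfb⟩ := hf 0 n.succ_pos
    rw [Function.iterate_succ_apply, ih hf', Function.iterate_succ_apply',
      integral_eval_mul_derivative_eval a b _ (derivative^[n] g)]
    simp only [Function.iterate_zero_apply] at hfa hfb
    rw [hfa, hfb]
    ring

theorem eval_iterate_derivative_eq_integral (ν : ℕ) {Q : ℝ[X]} (hQ1 : Q.eval 1 = 1)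
    (hQneg1 : Q.eval (-1) = 0) (hQ : ∀ i, 1 ≤ i → i ≤ ν →
      (derivative^[i] Q).eval 1 = 0 ∧ (derivative^[i] Q).eval (-1) = 0) (F : ℝ[X]) :
    (derivative^[ν] F).eval 1 =
      (∫ x in (-1)..1, Q.eval x * (derivative^[ν + 1] F).eval x) +
        (-1) ^ ν * ∫ x in (-1)..1, (derivative^[ν + 1] Q).eval x * F.eval x := by
  have hchain := integral_iterate_derivative_eval_mul_eval (n := ν) (f := derivative Q)
    (fun j hj => (hQ (j + 1) (by omega) (by omega)).symm) F
  rw [← Function.iterate_succ_apply] at hchain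
  rw [Function.iterate_succ_apply' derivative ν F, hchain,
    integral_eval_mul_derivative_eval, hQ1, hQneg1, ← mul_assoc, ← mul_pow]
  norm_num

end Polynomial

open Polynomial

theorem leg_natDegree_le (m : ℕ) : (leg m).natDegree ≤ m := by
  have hsq : ((X : ℝ[X]) ^ 2 - 1).natDegree ≤ 2 :=
    (natDegree_sub_le _ _).trans (by simp)
  have hpow : (((X : ℝ[X]) ^ 2 - 1) ^ m).natDegree ≤ 2 * m :=
    natDegree_pow_le.trans (by nlinarith)
  exact (natDegree_smul_le _ _).trans ((natDegree_iterate_derivative _ _).trans (by omega))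

/-- Orthogonality of `L_m` to `𝒫_{m-1}`, phrased so that `m = 0` needs no special case. -/
theorem integral_leg_mul_eq_zero {m : ℕ} {r : ℝ[X]} (hr : derivative^[m] r = 0) :
    ∫ x in (-1)..1, (leg m).eval x * r.eval x = 0 := by
  have hvanish : ∀ j < m, (derivative^[j] (((X : ℝ[X]) ^ 2 - 1) ^ m)).eval (-1) = 0 ∧
      (derivative^[j] (((X : ℝ[X]) ^ 2 - 1) ^ m)).eval 1 = 0 := by
    intro j hj
    obtain ⟨g, hg⟩ := pow_sub_dvd_iterate_derivative_pow ((X : ℝ[X]) ^ 2 - 1) m j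
    have hmj : m - j ≠ 0 := by omega
    simp [hg, zero_pow hmj]
  simp only [leg, eval_smul, smul_eq_mul, mul_assoc, intervalIntegral.integral_const_mul,
    integral_iterate_derivative_eval_mul_eval hvanish, hr, eval_zero, mul_zero,
    intervalIntegral.integral_zero]

theorem inLegSpan.exists_polynomial {i j : ℕ} {f : ℝ → ℝ} (hf : inLegSpan i j f) :
    ∃ Q : ℝ[X], (∀ x, f x = Q.eval x) ∧ Q.natDegree ≤ j ∧
      ∀ r : ℝ[X], derivative^[i] r = 0 → ∫ x in (-1)..1, Q.eval x * r.eval x = 0 := by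
  obtain ⟨c, hc⟩ := hf
  refine ⟨∑ m ∈ Finset.Icc i j, c m • leg m, fun x => by simp [hc x, eval_finsetSum],
    natDegree_sum_le_of_forall_le _ _ fun m hm =>
      (natDegree_smul_le _ _).trans ((leg_natDegree_le m).trans (Finset.mem_Icc.mp hm).2),
    fun r hr => ?_⟩
  have hleg : ∀ m ∈ Finset.Icc i j, ∫ x in (-1)..1, (leg m).eval x * r.eval x = 0 := by
    intro m hm
    apply integral_leg_mul_eq_zero
    rw [← Nat.sub_add_cancel (Finset.mem_Icc.mp hm).1, Function.iterate_add_apply, hr,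
      iterate_derivative_zero]
  simp only [eval_finsetSum, eval_smul, smul_eq_mul, Finset.sum_mul, mul_assoc]
  rw [intervalIntegral.integral_finsetSum (f := fun m x => c m * ((leg m).eval x * r.eval x))
    fun m _ => (((leg m).continuous.mul r.continuous).const_mul (c m)).intervalIntegrable _ _]
  exact Finset.sum_eq_zero fun m hm => by
    rw [intervalIntegral.integral_const_mul, hleg m hm, mul_zero]

theorem eval_iterate_derivative_error_eq_integral_sq {p ν : ℕ} {Q U R : ℝ[X]}
    (hQ1 : Q.eval 1 = 1) (hQneg1 : Q.eval (-1) = 0) (hQ : ∀ i, 1 ≤ i → i ≤ ν →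
      (derivative^[i] Q).eval 1 = 0 ∧ (derivative^[i] Q).eval (-1) = 0)
    (hQdeg : Q.natDegree ≤ p + ν + 1)
    (hQorth : ∀ r : ℝ[X], derivative^[p - ν] r = 0 →
      ∫ x in (-1)..1, Q.eval x * r.eval x = 0)
    (hUQ : derivative^[ν + 1] U = Q) (hRdeg : R.natDegree ≤ p)
    (horth : ∀ v : ℝ[X], v.natDegree ≤ p →
      ∫ x in (-1)..1, v.eval x * (U - R).eval x = 0) :
    (derivative^[ν] (U - R)).eval 1 = ∫ x in (-1)..1, Q.eval x * Q.eval x := by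
  have hR : ∫ x in (-1)..1, Q.eval x * (derivative^[ν + 1] R).eval x = 0 := by
    refine hQorth _ ?_
    rw [← Function.iterate_add_apply]
    exact iterate_derivative_eq_zero (by omega)
  rw [eval_iterate_derivative_eq_integral ν hQ1 hQneg1 hQ,
    horth _ ((natDegree_iterate_derivative _ _).trans (by omega)), iterate_derivative_sub, hUQ]
  simp only [eval_sub, mul_sub]
  rw [intervalIntegral.integral_sub (f := fun x => Q.eval x * Q.eval x)
    (g := fun x => Q.eval x * (derivative^[ν + 1] R).eval x)
    ((Q.continuous.mul Q.continuous).intervalIntegrable _ _)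
    ((Q.continuous.mul (Polynomial.continuous _)).intervalIntegrable _ _), hR]
  simp

theorem exists_polynomial_eqOn_of_iteratedDerivWithin {a b : ℝ} (hab : a < b) {n : ℕ}
    {f : ℝ → ℝ} (hf : ContDiffOn ℝ n f (Icc a b)) {g : ℝ[X]}
    (hg : ∀ x ∈ Icc a b, iteratedDerivWithin n f (Icc a b) x = g.eval x) :
    ∃ G : ℝ[X], derivative^[n] G = g ∧ ∀ x ∈ Icc a b, f x = G.eval x := by
  induction n generalizing f with
  | zero => exact ⟨g, rfl, fun x hx => by simpa using hg x hx⟩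
  | succ n ih =>
    have hs : UniqueDiffOn ℝ (Icc a b) := uniqueDiffOn_Icc hab
    obtain ⟨G', hG'g, hfG'⟩ := ih (f := derivWithin f (Icc a b))
      (hf.derivWithin hs (by norm_cast))
      (fun x hx => by rw [← iteratedDerivWithin_succ']; exact hg x hx)
    obtain ⟨H, hH⟩ := exists_derivative_eq G'
    let G := H + C (f a - H.eval a)
    have hfG : ∀ x ∈ Icc a b, f x = G.eval x := by
      refine eq_of_derivWithin_eq (hf.differentiableOn (by norm_num)) G.differentiableOn
        (fun x hx => ?_) (by simp [G])
      rw [G.derivWithin (hs x (Ico_subset_Icc_self hx)), hfG' x (Ico_subset_Icc_self hx)]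
      simp [G, hH]
    refine ⟨G, ?_, hfG⟩
    rw [Function.iterate_succ_apply, derivative_add, derivative_C, add_zero, hH, hG'g]

theorem setIntegral_Iom (f : ℝ → ℝ) : ∫ x in Iom, f x = ∫ x in (-1)..1, f x := by
  rw [intervalIntegral.integral_of_le (by norm_num), Iom, integral_Icc_eq_integral_Ioc]

theorem IsL2Proj.integral_eval_mul_eq_zero {p : ℕ} {w P : ℝ → ℝ} (hP : IsL2Proj p w P)
    {E : ℝ[X]} (hE : EqOn (fun x => w x - P x) E.eval Iom) {v : ℝ[X]} (hv : v.natDegree ≤ p) :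
    ∫ x in (-1)..1, v.eval x * E.eval x = 0 := by
  rw [← setIntegral_Iom, ← neg_eq_zero, ← integral_neg, ← hP.2 v hv]
  refine setIntegral_congr_fun measurableSet_Icc fun x hx => ?_
  simp only [← hE hx]
  ring

theorem trace_deriv_projection_error_sharp_general (p ν : ℕ)
    (u P q : ℝ → ℝ) (hu : MemH (ν + 1) u) (hP : IsL2Proj p u P) (hq : IsQ p ν q)
    (hderiv : ∀ x ∈ Iom, iteratedDerivWithin (ν + 1) u Iom x = q x) :
    |iteratedDerivWithin ν (fun y => u y - P y) Iom 1| =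
      Real.sqrt (nsq q) * Real.sqrt (semSq (ν + 1) u) := by
  obtain ⟨R, hRdeg, hPR⟩ := hP.1
  obtain ⟨hspan, hq1, hqneg1, hqderiv⟩ := hq
  obtain ⟨Q, hqQ, hQdeg, hQorth⟩ := hspan.exists_polynomial
  obtain rfl : q = fun x => Q.eval x := funext hqQ
  simp only [iteratedDeriv_eval] at hqderiv
  obtain ⟨U, hUQ, huU⟩ := exists_polynomial_eqOn_of_iteratedDerivWithin (by norm_num) hu hderiv
  have herror : EqOn (fun x => u x - P x) (U - R).eval Iom := fun x hx => by
    simp only [eval_sub, huU x hx, hPR]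
  have h1 : (1 : ℝ) ∈ Iom := by simp [Iom]
  have htrace : iteratedDerivWithin ν (fun y => u y - P y) Iom 1 = nsq fun x => Q.eval x := by
    rw [iteratedDerivWithin_congr herror h1,
      iteratedDerivWithin_eval _ _ (s := Iom) (uniqueDiffOn_Icc (by norm_num)) h1,
      eval_iterate_derivative_error_eq_integral_sq hq1 hqneg1 hqderiv hQdeg hQorth hUQ hRdeg
        fun v hv => hP.integral_eval_mul_eq_zero herror hv]
    simp only [nsq, setIntegral_Iom, sq]
  have hsemSq : semSq (ν + 1) u = nsq fun x => Q.eval x :=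
    setIntegral_congr_fun measurableSet_Icc fun x hx => by simp only [hderiv x hx]
  have hnsq_nonneg : 0 ≤ nsq fun x => Q.eval x :=
    setIntegral_nonneg measurableSet_Icc fun x _ => sq_nonneg _
  rw [htrace, hsemSq, Real.mul_self_sqrt hnsq_nonneg, abs_of_nonneg hnsq_nonneg]

/-- If moreover `u^{(ν+1)} = q_{p,ν}` on `Ω`, then the trace bound of
Statement 5 is attained with equality:
`|(u − π_p u)^{(ν)}(1)| = ‖q_{p,ν}‖₀ · |u|_{ν+1}`. -/
theorem trace_deriv_projection_error_sharp (p ν : ℕ) (hνp : ν ≤ p)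
    (u P q : ℝ → ℝ) (hu : MemH (ν + 1) u) (hP : IsL2Proj p u P) (hq : IsQ p ν q)
    (hderiv : ∀ x ∈ Iom, iteratedDerivWithin (ν + 1) u Iom x = q x) :
    |iteratedDerivWithin ν (fun y => u y - P y) Iom 1| =
      Real.sqrt (nsq q) * Real.sqrt (semSq (ν + 1) u) :=
  trace_deriv_projection_error_sharp_general p ν u P q hu hP hq hderiv
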